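/- arXiv:1509.03093 — 6 statements merged into one kernel-verified Lean document; each statement's English description precedes it below -/
import Mathlib

section
/- Suppose δ + η̲ − η ≥ r(Px†) and x̂_ρ satisfies ‖x̂_ρ‖² ≤ ρ and r(x̂_ρ) ≤ min{ r(x) : ‖x‖² ≤ ρ } + η, and the discrepancy bound r(x̂_ρ) > δ + η̲ holds. Then ρ ≤ ‖Px†‖². -/
open scoped RealInnerProductSpace

/-- Bound on the radius chosen by the (inexact) discrepancy principle:
under the tolerance condition `δ + η̲ - η ≥ r (P x†)` and the discrepancy
bound, the radius satisfies `ρ ≤ ‖P x†‖²`. -/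
theorem radius_bound
    {X : Type*} [NormedAddCommGroup X] [InnerProductSpace ℝ X] [FiniteDimensional ℝ X]
    (r : X → ℝ) (hr : ∀ x, 0 ≤ r x)
    (Pxdag xhat m : X) (δ η ηlow ρ : ℝ)
    (hδ : 0 < δ) (hη : 0 ≤ η)
    (htol : δ + ηlow - η ≥ r Pxdag)
    (hm : ‖m‖ ^ 2 ≤ ρ ∧ ∀ y : X, ‖y‖ ^ 2 ≤ ρ → r m ≤ r y)
    (hfeas : ‖xhat‖ ^ 2 ≤ ρ)
    (hinexact : r xhat ≤ r m + η)
    (hdisc : r xhat > δ + ηlow) :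
    ρ ≤ ‖Pxdag‖ ^ 2 := by
  by_contra h
  push_neg at h
  have h1 : r m ≤ r Pxdag := hm.2 _ h.le
  linarith
end

section
/- Assume the variational source condition: there exist β ∈ (0,1), R > 0 and a monotonically increasing function φ : ℝ⁺ → ℝ⁺ with φ(t) → 0 as t → 0, such that for all x with ‖x − x†‖ ≤ R one has 2⟨x†, x† − x⟩ ≤ β‖x† − x‖² + φ(S(F(x†),F(x))). Suppose x̃_δ ∈ B_R(x†), ‖x̃_δ‖² ≤ ‖x†‖² + C₁ φ(C₂ δ), S(F(x̃_δ), y^δ) ≤ C₃ δ, S(F(x†), y^δ) ≤ δ, and S satisfies S(y₁,y₂) ≤ C₄(S(y₁,y₃) + S(y₂,y₃)). Then (1 − β)‖x̃_δ − x†‖² ≤ C₁ φ(C₂ δ) + φ(C₄(C₃ + 1) δ). -/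
open scoped RealInnerProductSpace
open Filter

/-- Convergence rates under a variational source condition (Proposition 2). -/
theorem rates_from_variational_source_condition
    {X Y : Type*} [NormedAddCommGroup X] [InnerProductSpace ℝ X]
    (F : X → Y) (S : Y → Y → ℝ) (hS : ∀ y₁ y₂, 0 ≤ S y₁ y₂)
    (xdag xtil : X) (ydelta : Y) (δ : ℝ) (hδ : 0 < δ)
    (β R : ℝ) (hβ : β ∈ Set.Ioo (0 : ℝ) 1) (hR : 0 < R)
    (φ : ℝ → ℝ) (hφpos : ∀ t, 0 ≤ t → 0 ≤ φ t) (hφmono : Monotone φ)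
    (hφ0 : Tendsto φ (nhdsWithin 0 (Set.Ioi 0)) (nhds 0))
    (C₁ C₂ C₃ C₄ : ℝ) (hC₁ : 0 < C₁) (hC₂ : 0 < C₂) (hC₃ : 0 < C₃) (hC₄ : 0 < C₄)
    (hvsc : ∀ x : X, ‖x - xdag‖ ≤ R →
      2 * ⟪xdag, xdag - x⟫ ≤ β * ‖xdag - x‖ ^ 2 + φ (S (F xdag) (F x)))
    (hball : ‖xtil - xdag‖ ≤ R)
    (hnorm : ‖xtil‖ ^ 2 ≤ ‖xdag‖ ^ 2 + C₁ * φ (C₂ * δ))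
    (hres : S (F xtil) ydelta ≤ C₃ * δ)
    (hnoise : S (F xdag) ydelta ≤ δ)
    (htriangle : ∀ y₁ y₂ y₃, S y₁ y₂ ≤ C₄ * (S y₁ y₃ + S y₂ y₃)) :
    (1 - β) * ‖xtil - xdag‖ ^ 2 ≤ C₁ * φ (C₂ * δ) + φ (C₄ * (C₃ + 1) * δ) := by
  have hid : ‖xtil - xdag‖ ^ 2 = ‖xtil‖ ^ 2 - ‖xdag‖ ^ 2 + 2 * ⟪xdag, xdag - xtil⟫ := by
    have h1 : ‖xtil - xdag‖ ^ 2 = ‖xtil‖ ^ 2 - 2 * ⟪xtil, xdag⟫ + ‖xdag‖ ^ 2 := by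
      rw [← real_inner_self_eq_norm_sq, ← real_inner_self_eq_norm_sq, ← real_inner_self_eq_norm_sq]
      simp [inner_sub_sub_self, real_inner_comm xdag xtil]
      linarith [norm_sub_sq_real xtil xdag, real_inner_comm xdag xtil]
    have h2 : ⟪xdag, xdag - xtil⟫ = ‖xdag‖ ^ 2 - ⟪xtil, xdag⟫ := by
      rw [inner_sub_right, ← real_inner_self_eq_norm_sq, real_inner_comm xtil xdag]
    rw [h1, h2]; ring
  have hvsc' := hvsc xtil hball
  have hSbound : S (F xdag) (F xtil) ≤ C₄ * (C₃ + 1) * δ := by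
    have := htriangle (F xdag) (F xtil) ydelta
    nlinarith
  have hφb : φ (S (F xdag) (F xtil)) ≤ φ (C₄ * (C₃ + 1) * δ) := hφmono hSbound
  have hsymm : ‖xdag - xtil‖ = ‖xtil - xdag‖ := norm_sub_rev _ _
  rw [hsymm] at hvsc'
  linarith
end

section
/- Let r : Xₙ → ℝ be twice differentiable with L-Lipschitz second derivative, let x* be a minimizer of r over the ball {‖x‖² ≤ ρ} with Lagrange multiplier λ* ≥ 0 such that r''(x*) + λ* I is positive definite with smallest eigenvalue ≥ α > 0. Then there exists ε > 0 such that for any starting point x⁰ with ‖x⁰ − x*‖ ≤ ε, the sequence of minimizers x^{k+1} of the quadratic model q^k(x) = r(x^k) + r'(x^k)(x − x^k) + ½ r''(x^k)(x − x^k)² over the ball {‖x‖² ≤ ρ} satisfies ‖x^{k+1} − x*‖ ≤ (3L/α)‖x^k − x*‖² ≤ ‖x^k − x*‖, i.e., the iterates converge locally quadratically to x*. -/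
open scoped RealInnerProductSpace
open Metric

lemma taylor_bd {X : Type*} [NormedAddCommGroup X] [InnerProductSpace ℝ X]
    (r' : X → (X →L[ℝ] ℝ)) (r'' : X → (X →L[ℝ] X →L[ℝ] ℝ))
    (hd2 : ∀ x, HasFDerivAt r' (r'' x) x)
    (L : ℝ) (hL : 0 < L)
    (hLip : ∀ x xt : X, ‖r'' x - r'' xt‖ ≤ L * ‖x - xt‖)
    (a b : X) : ‖r' b - r' a - (r'' a) (b - a)‖ ≤ L * ‖b - a‖ * ‖b - a‖ := by
  have := Convex.norm_image_sub_le_of_norm_hasFDerivWithin_le'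
    (f := r') (f' := r'') (φ := r'' a) (s := closedBall a ‖b - a‖)
    (C := L * ‖b - a‖) (x := a) (y := b)
    (fun z _ => (hd2 z).hasFDerivWithinAt)
    (fun z hz => by
      refine (hLip z a).trans ?_
      have : ‖z - a‖ ≤ ‖b - a‖ := by
        simpa [dist_eq_norm] using (mem_closedBall.mp hz)
      exact mul_le_mul_of_nonneg_left this hL.le)
    (convex_closedBall _ _)
    (mem_closedBall_self (norm_nonneg _))
    (by simp [mem_closedBall, dist_eq_norm])
  exact this

set_option maxHeartbeats 2000000 in
lemma step_bd {X : Type*} [NormedAddCommGroup X] [InnerProductSpace ℝ X]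
    (r' : X → (X →L[ℝ] ℝ)) (r'' : X → (X →L[ℝ] X →L[ℝ] ℝ))
    (hd2 : ∀ x, HasFDerivAt r' (r'' x) x)
    (L : ℝ) (hL : 0 < L)
    (hLip : ∀ x xt : X, ‖r'' x - r'' xt‖ ≤ L * ‖x - xt‖)
    (ρ : ℝ) (xstar : X) (hball : ‖xstar‖ ^ 2 ≤ ρ)
    (lamstar : ℝ) (hlamstar : 0 ≤ lamstar)
    (hstat : ∀ w : X, (r' xstar) w + lamstar * ⟪xstar, w⟫ = 0)
    (hcomp : lamstar * (‖xstar‖ ^ 2 - ρ) = 0)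
    (α : ℝ) (hα : 0 < α)
    (hposdef : ∀ w : X, (r'' xstar) w w + lamstar * ‖w‖ ^ 2 ≥ α * ‖w‖ ^ 2)
    (xk xk1 : X) (lamk1 : ℝ)
    (ha : ‖xk - xstar‖ ≤ α / (3 * L))
    (hb1 : ‖xk1‖ ^ 2 ≤ ρ)
    (hl1 : 0 ≤ lamk1)
    (hst1 : ∀ w : X, (r' xk) w + ((r'' xk) (xk1 - xk)) w + lamk1 * ⟪xk1, w⟫ = 0)
    (hc1 : lamk1 * (‖xk1‖ ^ 2 - ρ) = 0)
    (hsos : ∀ w : X, (r'' xk) w w + lamk1 * ‖w‖ ^ 2 ≥ 0) :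
    ‖xk1 - xstar‖ ≤ (3 * L / α) * ‖xk - xstar‖ ^ 2 := by
  set d := xk - xstar with hd
  set e := xk1 - xstar with he
  set a := ‖d‖ with ha'
  set b := ‖e‖ with hb'
  -- Taylor bound applied to e
  have hT : |(r' xstar) e - (r' xk) e + ((r'' xk) d) e| ≤ L * a ^ 2 * b := by
    have h1 := taylor_bd r' r'' hd2 L hL hLip xk xstar
    have h2 := (r' xstar - r' xk - (r'' xk) (xstar - xk)).le_opNorm e
    have h3 : ‖(r' xstar - r' xk - (r'' xk) (xstar - xk)) e‖
        ≤ (L * ‖xstar - xk‖ * ‖xstar - xk‖) * ‖e‖ :=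
      h2.trans (by
        apply mul_le_mul_of_nonneg_right h1 (norm_nonneg _))
    have h4 : (r' xstar - r' xk - (r'' xk) (xstar - xk)) e
        = (r' xstar) e - (r' xk) e + ((r'' xk) d) e := by
      have : xstar - xk = -d := by rw [hd]; abel
      simp [this, ContinuousLinearMap.sub_apply]
    have h5 : ‖xstar - xk‖ = a := by rw [ha', hd, norm_sub_rev]
    rw [h4, h5] at h3
    calc |(r' xstar) e - (r' xk) e + ((r'' xk) d) e|
        = ‖(r' xstar) e - (r' xk) e + ((r'' xk) d) e‖ := (Real.norm_eq_abs _).symm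
      _ ≤ L * a * a * b := h3
      _ = L * a ^ 2 * b := by ring
  -- Hessian difference bound
  have hD : |((r'' xk) e) e - ((r'' xstar) e) e| ≤ L * a * b ^ 2 := by
    have h1 := ((r'' xk - r'' xstar) e).le_opNorm e
    have h2 := (r'' xk - r'' xstar).le_opNorm e
    have h3 : ‖((r'' xk - r'' xstar) e) e‖ ≤ ‖r'' xk - r'' xstar‖ * ‖e‖ * ‖e‖ :=
      h1.trans (mul_le_mul_of_nonneg_right h2 (norm_nonneg _))
    have h4 : ‖r'' xk - r'' xstar‖ ≤ L * a := by simpa [hd] using hLip xk xstar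
    have h5 : ((r'' xk - r'' xstar) e) e = ((r'' xk) e) e - ((r'' xstar) e) e := by
      simp [ContinuousLinearMap.sub_apply]
    calc |((r'' xk) e) e - ((r'' xstar) e) e|
        = ‖((r'' xk - r'' xstar) e) e‖ := by rw [h5, Real.norm_eq_abs]
      _ ≤ (L * a) * b * b := h3.trans (by
          apply mul_le_mul_of_nonneg_right
          exact mul_le_mul_of_nonneg_right h4 (norm_nonneg _)
          exact norm_nonneg _)
      _ = L * a * b ^ 2 := by ring
  -- stationarity combination
  have heq1 := hst1 e
  have heq2 := hstat e
  have hsplit : ((r'' xk) (xk1 - xk)) e = ((r'' xk) e) e - ((r'' xk) d) e := by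
    have : xk1 - xk = e - d := by rw [he, hd]; abel
    simp [this, ContinuousLinearMap.sub_apply]
  -- inner product identities
  have hnorm : b ^ 2 = ‖xk1‖ ^ 2 - 2 * ⟪xk1, xstar⟫ + ‖xstar‖ ^ 2 := by
    rw [hb', he]
    rw [@norm_sub_sq_real]
  have hI1 : ⟪xk1, e⟫ = (‖xk1‖ ^ 2 - ‖xstar‖ ^ 2 + b ^ 2) / 2 := by
    rw [he, inner_sub_right, real_inner_self_eq_norm_sq]
    linarith [hnorm]
  have hI2 : ⟪xstar, e⟫ = (‖xk1‖ ^ 2 - ‖xstar‖ ^ 2 - b ^ 2) / 2 := by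
    rw [he, inner_sub_right, real_inner_self_eq_norm_sq, real_inner_comm]
    linarith [hnorm]
  have hpos1 := hsos e
  have hpos2 := hposdef e
  rw [hsplit, hI1] at heq1
  rw [hI2] at heq2
  -- collect
  have hbnn : 0 ≤ b := norm_nonneg _
  have hann : 0 ≤ a := norm_nonneg _
  have hLa : L * a ≤ α / 3 := by
    have := mul_le_mul_of_nonneg_left ha hL.le
    calc L * a ≤ L * (α / (3 * L)) := this
      _ = α / 3 := by field_simp
  rw [← hb'] at hpos1 hpos2
  have hiden : (r' xstar) e - (r' xk) e + ((r'' xk) d) e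
      = ((r'' xk) e) e + (lamk1 + lamstar) / 2 * b ^ 2
        + lamk1 * (ρ - ‖xstar‖ ^ 2) / 2 + lamstar * (ρ - ‖xk1‖ ^ 2) / 2 := by
    linear_combination heq2 - heq1 + hc1 / 2 + hcomp / 2
  have hP : 0 ≤ lamk1 * (ρ - ‖xstar‖ ^ 2) := mul_nonneg hl1 (by linarith)
  have hQ : 0 ≤ lamstar * (ρ - ‖xk1‖ ^ 2) := mul_nonneg hlamstar (by linarith)
  have habs := (abs_le.mp hT).2
  have hDlow := (abs_le.mp hD).1
  have hcomb : ((r'' xk) e) e + (lamk1 + lamstar) / 2 * b ^ 2 ≤ L * a ^ 2 * b := by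
    linarith [hiden ▸ habs]
  have key : (α - L * a) / 2 * b ^ 2 ≤ L * a ^ 2 * b := by
    linarith [hpos1, hpos2, hDlow, hcomb]
  rcases eq_or_lt_of_le hbnn with hb0 | hb0
  · rw [← hb0]
    positivity
  · have h6 : α / 3 * b ^ 2 ≤ L * a ^ 2 * b := by nlinarith
    rw [div_mul_eq_mul_div, le_div_iff₀ hα]
    nlinarith


/-- Proposition 3: local quadratic convergence of the successive quadratic
trust-region (SQP-type) iteration under the shifted-Hessian positivity
condition at the constrained minimizer. -/
theorem local_quadratic_convergence
    {X : Type*} [NormedAddCommGroup X] [InnerProductSpace ℝ X] [FiniteDimensional ℝ X]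
    (r : X → ℝ) (r' : X → (X →L[ℝ] ℝ)) (r'' : X → (X →L[ℝ] X →L[ℝ] ℝ))
    (hd1 : ∀ x, HasFDerivAt r (r' x) x)
    (hd2 : ∀ x, HasFDerivAt r' (r'' x) x)
    (L : ℝ) (hL : 0 < L)
    (hLip : ∀ x xt : X, ‖r'' x - r'' xt‖ ≤ L * ‖x - xt‖)
    (ρ : ℝ) (hρ : 0 < ρ) (xstar : X)
    (hmin : ‖xstar‖ ^ 2 ≤ ρ ∧ ∀ y : X, ‖y‖ ^ 2 ≤ ρ → r xstar ≤ r y)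
    (lamstar : ℝ) (hlamstar : 0 ≤ lamstar)
    (hstat : ∀ w : X, (r' xstar) w + lamstar * ⟪xstar, w⟫ = 0)
    (hcomp : lamstar * (‖xstar‖ ^ 2 - ρ) = 0)
    (α : ℝ) (hα : 0 < α)
    (hposdef : ∀ w : X, (r'' xstar) w w + lamstar * ‖w‖ ^ 2 ≥ α * ‖w‖ ^ 2) :
    ∃ ε > 0, ∀ (x : ℕ → X) (lam : ℕ → ℝ),
      ‖x 0 - xstar‖ ≤ ε →
      (∀ k : ℕ,
        ‖x (k + 1)‖ ^ 2 ≤ ρ ∧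
        (∀ y : X, ‖y‖ ^ 2 ≤ ρ →
          r (x k) + (r' (x k)) (x (k + 1) - x k)
            + (1 / 2) * (r'' (x k)) (x (k + 1) - x k) (x (k + 1) - x k) ≤
          r (x k) + (r' (x k)) (y - x k)
            + (1 / 2) * (r'' (x k)) (y - x k) (y - x k)) ∧
        0 ≤ lam (k + 1) ∧
        (∀ w : X, (r' (x k)) w + ((r'' (x k)) (x (k + 1) - x k)) w
            + lam (k + 1) * ⟪x (k + 1), w⟫ = 0) ∧
        lam (k + 1) * (‖x (k + 1)‖ ^ 2 - ρ) = 0 ∧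
        (∀ w : X, (r'' (x k)) w w + lam (k + 1) * ‖w‖ ^ 2 ≥ 0)) →
      ∀ k : ℕ,
        ‖x (k + 1) - xstar‖ ≤ (3 * L / α) * ‖x k - xstar‖ ^ 2 ∧
        (3 * L / α) * ‖x k - xstar‖ ^ 2 ≤ ‖x k - xstar‖ := by
  obtain ⟨hball, -⟩ := hmin
  refine ⟨α / (3 * L), by positivity, ?_⟩
  intro x lam h0 hK
  have quad : ∀ a : ℝ, 0 ≤ a → a ≤ α / (3 * L) → (3 * L / α) * a ^ 2 ≤ a := by
    intro a h1 h2
    have h3 : (0:ℝ) < 3 * L := by linarith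
    rw [div_mul_eq_mul_div, div_le_iff₀ hα]
    calc 3 * L * a ^ 2 = (3 * L * a) * a := by ring
      _ ≤ (3 * L * a) * (α / (3 * L)) :=
          mul_le_mul_of_nonneg_left h2 (mul_nonneg h3.le h1)
      _ = a * α := by field_simp
  have inv : ∀ k, ‖x k - xstar‖ ≤ α / (3 * L) := by
    intro k
    induction k with
    | zero => exact h0
    | succ k ih =>
      obtain ⟨c1, -, c3, c4, c5, c6⟩ := hK k
      have hs := step_bd r' r'' hd2 L hL hLip ρ xstar hball lamstar hlamstar hstat hcomp
        α hα hposdef (x k) (x (k + 1)) (lam (k + 1)) ih c1 c3 c4 c5 c6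
      exact hs.trans ((quad _ (norm_nonneg _) ih).trans ih)
  intro k
  obtain ⟨c1, -, c3, c4, c5, c6⟩ := hK k
  exact ⟨step_bd r' r'' hd2 L hL hLip ρ xstar hball lamstar hlamstar hstat hcomp
    α hα hposdef (x k) (x (k + 1)) (lam (k + 1)) (inv k) c1 c3 c4 c5 c6,
    quad _ (norm_nonneg _) (inv k)⟩
end

section
/- Let x† > 0, C ∈ (1/(12 x†²), 1/(4 x†²)), and D > (48 C x†² − 1)/(12 (1/(2√C) − x†)²), and define r(x) = ½(x − x†)² − C(x − x†)⁴ + D·min{0,x}⁴. Then for every x ∈ [−x†, x†] \ {0} with −r'(x)/x ≥ 0, one has r''(x) − r'(x)/x > 0. -/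
lemma minpow (n : ℕ) (x : ℝ) :
    HasDerivAt (fun y : ℝ => (min 0 y) ^ (n + 2)) (((n : ℝ) + 2) * (min 0 x) ^ (n + 1)) x := by
  rcases lt_trichotomy x 0 with hx | hx | hx
  · have h1 : HasDerivAt (fun y : ℝ => y ^ (n + 2)) (((n : ℝ) + 2) * x ^ (n + 1)) x := by
      simpa using hasDerivAt_pow (n + 2) x
    have heq : (fun y : ℝ => (min 0 y) ^ (n + 2)) =ᶠ[nhds x] (fun y : ℝ => y ^ (n + 2)) := by
      filter_upwards [Iio_mem_nhds hx] with y hy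
      rw [min_eq_right hy.le]
    rw [min_eq_right hx.le]
    exact h1.congr_of_eventuallyEq heq
  · subst hx
    rw [hasDerivAt_iff_tendsto_slope]
    have hval : ((n : ℝ) + 2) * (min 0 (0:ℝ)) ^ (n + 1) = 0 := by simp
    rw [hval]
    apply squeeze_zero_norm (a := fun y : ℝ => |y| ^ (n + 1))
    · intro y
      by_cases hy : y = 0
      · simp [hy, slope]
      · have h1 : |min 0 y| ≤ |y| := by
          rcases le_or_gt 0 y with h | h
          · rw [min_eq_left h]; simp [abs_nonneg]
          · rw [min_eq_right h.le]
        have : slope (fun y : ℝ => (min 0 y) ^ (n + 2)) 0 y = (min 0 y) ^ (n + 2) / y := by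
          simp [slope, hy]; ring
        rw [this, Real.norm_eq_abs, abs_div, abs_pow]
        rw [div_le_iff₀ (abs_pos.mpr hy)]
        calc |min 0 y| ^ (n + 2) ≤ |y| ^ (n + 2) := pow_le_pow_left₀ (abs_nonneg _) h1 _
          _ = |y| ^ (n + 1) * |y| := by ring
    · have : Filter.Tendsto (fun y : ℝ => |y| ^ (n + 1)) (nhds 0) (nhds 0) := by
        have := ((continuous_abs.pow (n + 1)).tendsto (0:ℝ))
        convert this using 2 <;> simp
      exact this.mono_left nhdsWithin_le_nhds
  · have heq : (fun y : ℝ => (min 0 y) ^ (n + 2)) =ᶠ[nhds x] (fun _ : ℝ => (0:ℝ)) := by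
      filter_upwards [Ioi_mem_nhds hx] with y hy
      rw [min_eq_left hy.le]; simp
    have h0 : ((n : ℝ) + 2) * (min 0 x) ^ (n + 1) = 0 := by
      rw [min_eq_left hx.le]; simp
    rw [h0]
    exact (hasDerivAt_const x 0).congr_of_eventuallyEq heq

lemma deriv_r (xdag C D : ℝ) (x : ℝ) :
    HasDerivAt (fun x : ℝ => (1 / 2) * (x - xdag) ^ 2 - C * (x - xdag) ^ 4 + D * (min 0 x) ^ 4)
      ((x - xdag) - 4 * C * (x - xdag) ^ 3 + 4 * D * (min 0 x) ^ 3) x := by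
  have h1 : HasDerivAt (fun y : ℝ => y - xdag) 1 x := (hasDerivAt_id x).sub_const _
  have h2 := ((h1.fun_pow 2).const_mul (1/2 : ℝ))
  have h4 := ((h1.fun_pow 4).const_mul C)
  have hm := (minpow 2 x).const_mul D
  convert (h2.fun_sub h4).fun_add hm using 1
  · rfl
  · rfl
  push_cast
  ring

lemma deriv_r1 (xdag C D : ℝ) (x : ℝ) :
    HasDerivAt (fun x : ℝ => (x - xdag) - 4 * C * (x - xdag) ^ 3 + 4 * D * (min 0 x) ^ 3)
      (1 - 12 * C * (x - xdag) ^ 2 + 12 * D * (min 0 x) ^ 2) x := by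
  have h1 : HasDerivAt (fun y : ℝ => y - xdag) 1 x := (hasDerivAt_id x).sub_const _
  have h3 := ((h1.fun_pow 3).const_mul (4 * C))
  have hm := (minpow 1 x).const_mul (4 * D)
  convert (h1.fun_sub h3).fun_add hm using 1
  · rfl
  · rfl
  push_cast
  ring

set_option maxHeartbeats 1000000 in
/-- One-dimensional example: the shifted Hessian `r'' (x) - r'(x)/x` is positive
at every admissible point, even though `r` is nonconvex. -/
theorem example_shifted_hessian_positive
    (xdag C D : ℝ) (hxdag : 0 < xdag)
    (hC : C ∈ Set.Ioo (1 / (12 * xdag ^ 2)) (1 / (4 * xdag ^ 2)))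
    (hD : D > (48 * C * xdag ^ 2 - 1) / (12 * (1 / (2 * Real.sqrt C) - xdag) ^ 2))
    (r : ℝ → ℝ)
    (hr : r = fun x => (1 / 2) * (x - xdag) ^ 2 - C * (x - xdag) ^ 4 + D * (min 0 x) ^ 4) :
    ∀ x ∈ Set.Icc (-xdag) xdag, x ≠ 0 → -deriv r x / x ≥ 0 →
      deriv (deriv r) x - deriv r x / x > 0 := by
  obtain ⟨hC1, hC2⟩ := hC
  have hx2 : (0:ℝ) < xdag ^ 2 := by positivity
  -- basic consequences of hC
  have hCpos : 0 < C := lt_trans (by positivity) hC1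
  have h12 : 1 < 12 * C * xdag ^ 2 := by
    rw [div_lt_iff₀ (by positivity)] at hC1; nlinarith
  have h4 : 4 * C * xdag ^ 2 < 1 := by
    rw [lt_div_iff₀ (by positivity)] at hC2; nlinarith
  -- sqrt facts
  set s := Real.sqrt C with hs
  have hspos : 0 < s := Real.sqrt_pos.mpr hCpos
  have hsq : s ^ 2 = C := Real.sq_sqrt hCpos.le
  set a := 1 / (2 * s) - xdag with ha
  clear_value s
  have hsx : s * xdag < 1 / 2 := by nlinarith [sq_nonneg (s * xdag - 1/2)]
  clear_value a
  have hapos : 0 < a := by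
    rw [ha, sub_pos, lt_div_iff₀ (by positivity)]
    nlinarith
  have hDpos : 0 < D := by
    have : 0 < (48 * C * xdag ^ 2 - 1) / (12 * a ^ 2) := by
      apply div_pos (by nlinarith) (by positivity)
    calc (0:ℝ) < _ := this
      _ < D := hD
  have hDa : 48 * C * xdag ^ 2 - 1 < 12 * D * a ^ 2 := by
    rw [gt_iff_lt, div_lt_iff₀ (by positivity)] at hD
    nlinarith
  clear hC1 hC2 hD
  -- derivatives
  have hd1 : deriv r = fun x => (x - xdag) - 4 * C * (x - xdag) ^ 3 + 4 * D * (min 0 x) ^ 3 := by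
    funext y
    rw [hr]
    exact (deriv_r xdag C D y).deriv
  intro x hx hx0 hlam
  obtain ⟨hxl, hxr⟩ := hx
  have hd2 : deriv (deriv r) x = 1 - 12 * C * (x - xdag) ^ 2 + 12 * D * (min 0 x) ^ 2 := by
    rw [hd1]
    exact (deriv_r1 xdag C D x).deriv
  rw [hd2]
  rw [hd1] at hlam ⊢
  simp only at hlam ⊢
  clear hd1 hd2 hr
  have hq : ((x - xdag) - 4 * C * (x - xdag) ^ 3 + 4 * D * (min 0 x) ^ 3) / x ≤ 0 := by
    rw [ge_iff_le, neg_div] at hlam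
    linarith
  clear hlam
  rcases hx0.lt_or_gt with hneg | hpos
  · -- x < 0
    have hm : min 0 x = x := min_eq_right hneg.le
    rw [hm] at hq ⊢
    have hBnn : 0 ≤ (x - xdag) - 4 * C * (x - xdag) ^ 3 + 4 * D * x ^ 3 := by
      have h1 := mul_nonneg (neg_nonneg.mpr hq) (neg_nonneg.mpr hneg.le)
      rwa [neg_mul_neg, div_mul_cancel₀ _ hneg.ne] at h1
    have hcube : 4 * D * x ^ 3 < 0 := by nlinarith [pow_pos (neg_pos.mpr hneg) 3]
    have hu : x - xdag < 0 := by linarith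
    have huu : 0 < (x - xdag) - 4 * C * (x - xdag) ^ 3 := by linarith
    have h4C : 1 < 4 * C * (x - xdag) ^ 2 := by nlinarith
    have hux : 1 / (2 * s) < -(x - xdag) := by
      rw [div_lt_iff₀ (by positivity)]
      have hCs : 4 * C * (x - xdag) ^ 2 = (2 * s * (x - xdag)) ^ 2 := by
        rw [← hsq]; ring
      rw [hCs] at h4C
      nlinarith [mul_pos hspos (neg_pos.mpr hu)]
    have hxa : a < -x := by rw [ha]; linarith
    have hx2a : a ^ 2 < x ^ 2 := by
      have h := mul_self_lt_mul_self hapos.le hxa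
      nlinarith [h]
    have hu2 : (x - xdag) ^ 2 ≤ 4 * xdag ^ 2 := by
      nlinarith [mul_nonneg (by linarith : (0:ℝ) ≤ x + xdag) (by linarith : (0:ℝ) ≤ 3 * xdag - x)]
    have hA : 0 < 1 - 12 * C * (x - xdag) ^ 2 + 12 * D * x ^ 2 := by
      have e1 := mul_pos hDpos (sub_pos.mpr hx2a)
      have e2 := mul_nonneg hCpos.le (sub_nonneg.mpr hu2)
      nlinarith [e1, e2, hDa]
    linarith
  · -- 0 < x
    have hm : min 0 x = 0 := min_eq_left hpos.le
    rw [hm] at hq ⊢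
    rw [gt_iff_lt, sub_pos, div_lt_iff₀ hpos]
    have key : (x - xdag) - 4 * C * (x - xdag) ^ 3 + 4 * D * 0 ^ 3
        = x * (1 - 12 * C * (x - xdag) ^ 2 + 12 * D * 0 ^ 2)
          - (xdag * (1 - 4 * C * xdag ^ 2) + 4 * C * x ^ 2 * (3 * xdag - 2 * x)) := by ring
    rw [key]
    nlinarith [mul_pos hxdag (by linarith : (0:ℝ) < 1 - 4 * C * xdag ^ 2),
      mul_nonneg (mul_nonneg hCpos.le (sq_nonneg x)) (by linarith : (0:ℝ) ≤ 3 * xdag - 2 * x)]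
end

section
/- Suppose for all w ∈ Xₙ one has ‖F''(x̄)w²‖ ≤ C ‖F'(x̄)w‖², and suppose ‖F(x̄) − y^δ‖ ≤ τδ + η̄ with (τδ + η̄)·C < 1, and λ ≥ 0 with λ > 0 or F'(x̄) injective. Then for all w ≠ 0: ‖F'(x̄)w‖² + ⟨F(x̄) − y^δ, F''(x̄)w²⟩ + λ‖w‖² > 0. -/
open scoped RealInnerProductSpace

/-- Verification of the positive-definiteness condition (28) for the Hessian of
`r(x) = ½‖F(x) - y^δ‖²` under a nonlinearity condition on `F`. -/
theorem posdef_condition_from_nonlinearity_bound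
    {X Y : Type*} [NormedAddCommGroup X] [InnerProductSpace ℝ X] [FiniteDimensional ℝ X]
    [NormedAddCommGroup Y] [InnerProductSpace ℝ Y] [FiniteDimensional ℝ Y]
    (F : X → Y) (F' : X → (X →L[ℝ] Y)) (F'' : X →L[ℝ] X →L[ℝ] Y)
    (xbar : X) (ydelta : Y)
    (hd1 : ∀ x, HasFDerivAt F (F' x) x)
    (hd2 : HasFDerivAt F' F'' xbar)
    (C τ δ ηbar : ℝ) (hC : 0 < C) (hτ : 0 < τ) (hδ : 0 < δ) (hηbar : 0 < ηbar)
    (hnonlin : ∀ w : X, ‖F'' w w‖ ≤ C * ‖(F' xbar) w‖ ^ 2)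
    (hres : ‖F xbar - ydelta‖ ≤ τ * δ + ηbar)
    (hsmall : (τ * δ + ηbar) * C < 1)
    (lam : ℝ) (hlam : 0 ≤ lam)
    (hcase : 0 < lam ∨ Function.Injective (F' xbar)) :
    ∀ w : X, w ≠ 0 →
      ‖(F' xbar) w‖ ^ 2 + ⟪F xbar - ydelta, F'' w w⟫ + lam * ‖w‖ ^ 2 > 0 := by
  intro w hw
  have hr : (0:ℝ) ≤ τ * δ + ηbar := le_of_lt (by positivity)
  have hCS : |⟪F xbar - ydelta, F'' w w⟫| ≤ ‖F xbar - ydelta‖ * ‖F'' w w‖ :=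
    abs_real_inner_le_norm _ _
  have h1 : ⟪F xbar - ydelta, F'' w w⟫ ≥ -((τ * δ + ηbar) * C * ‖(F' xbar) w‖ ^ 2) := by
    have h2 : ‖F xbar - ydelta‖ * ‖F'' w w‖ ≤ (τ * δ + ηbar) * (C * ‖(F' xbar) w‖ ^ 2) :=
      mul_le_mul hres (hnonlin w) (norm_nonneg _) hr
    nlinarith [neg_abs_le (⟪F xbar - ydelta, F'' w w⟫)]
  have key : ‖(F' xbar) w‖ ^ 2 + ⟪F xbar - ydelta, F'' w w⟫ + lam * ‖w‖ ^ 2 ≥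
      (1 - (τ * δ + ηbar) * C) * ‖(F' xbar) w‖ ^ 2 + lam * ‖w‖ ^ 2 := by nlinarith
  have hcoef : 0 < 1 - (τ * δ + ηbar) * C := by linarith
  rcases hcase with hpos | hinj
  · have : 0 < lam * ‖w‖ ^ 2 := by
      have : 0 < ‖w‖ := norm_pos_iff.mpr hw
      positivity
    nlinarith [sq_nonneg ‖(F' xbar) w‖]
  · have hne : (F' xbar) w ≠ 0 := by
      intro h; exact hw (hinj (by simpa using h))
    have : 0 < ‖(F' xbar) w‖ := norm_pos_iff.mpr hne
    nlinarith [mul_pos hcoef (pow_pos this 2), mul_nonneg hlam (sq_nonneg ‖w‖)]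
end

section
/- Let μ* = min{x^T A x − 2 a^T x : ‖x‖² ≤ s²} with the minimum attained at a boundary point. Then μ* ≥ max_{t ∈ ℝ} [ (s² + 1)·λ_min(D(t)) − t ], where D(t) = [[t, −a^T],[−a, A]]. -/
open Matrix

lemma rayleigh_min_aux {m : Type*} [Fintype m] [DecidableEq m] [Nonempty m]
    {M : Matrix m m ℝ} (hM : M.IsHermitian) (y : m → ℝ) :
    (⨅ i, hM.eigenvalues i) * (y ⬝ᵥ y) ≤ y ⬝ᵥ M *ᵥ y := by
  classical
  set U : Matrix m m ℝ := (hM.eigenvectorUnitary : Matrix m m ℝ) with hU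
  set d : m → ℝ := hM.eigenvalues with hd
  have hstar : star U = Uᵀ := by ext i j; simp [Matrix.star_apply]
  set z : m → ℝ := Uᵀ *ᵥ y with hz
  have hUU : U * Uᵀ = 1 := by
    rw [← hstar]; exact Unitary.mul_star_self_of_mem hM.eigenvectorUnitary.2
  have hofReal : (RCLike.ofReal : ℝ → ℝ) ∘ d = d := by
    funext i; simp
  have hdiag : z ⬝ᵥ (diagonal d) *ᵥ z = y ⬝ᵥ M *ᵥ y := by
    calc z ⬝ᵥ (diagonal d) *ᵥ z
        = (Uᵀ *ᵥ y) ⬝ᵥ ((diagonal d * Uᵀ) *ᵥ y) := by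
          rw [hz, mulVec_mulVec]
      _ = (y ᵥ* U) ⬝ᵥ ((diagonal d * Uᵀ) *ᵥ y) := by rw [mulVec_transpose]
      _ = y ⬝ᵥ (U * (diagonal d * Uᵀ)) *ᵥ y := by
          rw [← dotProduct_mulVec, mulVec_mulVec]
      _ = y ⬝ᵥ M *ᵥ y := by
          conv_rhs => rw [hM.spectral_theorem, Unitary.conjStarAlgAut_apply]
          rw [hstar, hofReal, Matrix.mul_assoc]
  have hnorm : z ⬝ᵥ z = y ⬝ᵥ y := by
    calc z ⬝ᵥ z = (y ᵥ* U) ⬝ᵥ (Uᵀ *ᵥ y) := by rw [hz, mulVec_transpose]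
      _ = y ⬝ᵥ (U * Uᵀ) *ᵥ y := by rw [← mulVec_mulVec, ← dotProduct_mulVec]
      _ = y ⬝ᵥ y := by rw [hUU, one_mulVec]
  rw [← hdiag, ← hnorm]
  have hsum : z ⬝ᵥ (diagonal d) *ᵥ z = ∑ i, d i * (z i * z i) := by
    simp [dotProduct, mulVec_diagonal, mul_comm, mul_assoc, mul_left_comm]
  have hsum2 : z ⬝ᵥ z = ∑ i, z i * z i := rfl
  rw [hsum, hsum2, Finset.mul_sum]
  apply Finset.sum_le_sum
  intro i _
  have hle : (⨅ j, d j) ≤ d i := ciInf_le (Finite.bddBelow_range _) i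
  exact mul_le_mul_of_nonneg_right hle (mul_self_nonneg _)

/-- Weak duality in the Rendl–Wolkowicz eigenvalue reformulation: when the trust
region minimum is attained at a boundary point, its value dominates
`(s² + 1)·λ_min(D(t)) - t` for every `t`. -/
theorem trust_region_weak_duality
    (n : ℕ) (A : Matrix (Fin n) (Fin n) ℝ) (hA : A.IsSymm)
    (a : Fin n → ℝ) (s : ℝ) (hs : 0 < s)
    (xstar : Fin n → ℝ)
    (hbdry : (∑ i, xstar i ^ 2) = s ^ 2)
    (hmin : ∀ x : Fin n → ℝ, (∑ i, x i ^ 2) ≤ s ^ 2 →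
      xstar ⬝ᵥ A.mulVec xstar - 2 * (a ⬝ᵥ xstar) ≤ x ⬝ᵥ A.mulVec x - 2 * (a ⬝ᵥ x))
    (μstar : ℝ) (hμstar : μstar = xstar ⬝ᵥ A.mulVec xstar - 2 * (a ⬝ᵥ xstar))
    (D : ℝ → Matrix (Unit ⊕ Fin n) (Unit ⊕ Fin n) ℝ)
    (hDdef : ∀ t, D t = Matrix.fromBlocks
      (Matrix.of fun _ _ => t) (Matrix.of fun _ j => -a j)
      (Matrix.of fun i _ => -a i) A)
    (hD : ∀ t, (D t).IsHermitian) :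
    ∀ t : ℝ, μstar ≥ (s ^ 2 + 1) * (⨅ i, (hD t).eigenvalues i) - t := by
  intro t
  set y : Unit ⊕ Fin n → ℝ := Sum.elim (fun _ => 1) xstar with hy
  have key := rayleigh_min_aux (hD t) y
  have hyy : y ⬝ᵥ y = s ^ 2 + 1 := by
    simp only [hy, dotProduct, Fintype.sum_sum_type]
    simp only [Sum.elim_inl, Sum.elim_inr, mul_one]
    rw [show ∀ x : Fin n → ℝ, (∑ i, x i * x i) = ∑ i, x i ^ 2 from fun x => by
      simp [sq], hbdry]
    simp; ring
  have hquad : y ⬝ᵥ (D t) *ᵥ y = μstar + t := by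
    rw [hDdef t, hμstar]
    simp only [hy, dotProduct, mulVec, dotProduct, Fintype.sum_sum_type,
      fromBlocks_apply₁₁, fromBlocks_apply₁₂, fromBlocks_apply₂₁, fromBlocks_apply₂₂,
      Sum.elim_inl, Sum.elim_inr, of_apply, mul_one, one_mul,
      Finset.univ_unique, Finset.sum_singleton]
    simp only [mul_add, mul_neg, neg_mul, Finset.sum_add_distrib, Finset.sum_neg_distrib]
    rw [show (∑ x, xstar x * a x) = ∑ x, a x * xstar x from
      Finset.sum_congr rfl fun i _ => mul_comm _ _]
    ring
  rw [hyy, hquad] at key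
  linarith [key]
end
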